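/- For every real t and nonnegative integers m, n: ∫_ℝ H_m(y) H_n(y) e^{-y² - ity} dy = (-1)^n √π · 2^{(m+n)/2} · e^{-t²/4} · H_{m,n}(-it/√2, it/√2). -/

import Mathlib

open MeasureTheory Complex Real

noncomputable def Hphys (n : ℕ) (x : ℝ) : ℝ :=
  (-1 : ℝ)^n * Real.exp (x^2) * iteratedDeriv n (fun t : ℝ => Real.exp (-t^2)) x

noncomputable def hFun (n : ℕ) (x : ℝ) : ℝ := Real.exp (-x^2/2) * Hphys n x

noncomputable def Hc (m n : ℕ) (z : ℂ) : ℂ :=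
  ∑ k ∈ Finset.range (min m n + 1),
    (-1 : ℂ)^k * (Nat.factorial k : ℂ) * (Nat.choose m k : ℂ) * (Nat.choose n k : ℂ)
      * z^(m-k) * (starRingEnd ℂ z)^(n-k)

noncomputable def Lag (n α : ℕ) (x : ℂ) : ℂ :=
  ∑ k ∈ Finset.range (n + 1),
    (-1 : ℂ)^k * (Nat.choose (n + α) (n - k) : ℂ) * x^k / (Nat.factorial k : ℂ)


/-!
Write `F t P = ∫ P(y) e^{-y²-ity} dy` for a real polynomial `P`. Integrating the derivative of
`P(y) e^{-y²-ity}` over `ℝ` gives `F t (P' - 2yP) = it · F t P`. Together with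
`H_{n+1} = 2yH_n - H_n'` and `H_m' = 2mH_{m-1}` this yields the recursion
`F(H_m H_{n+1}) = -it · F(H_m H_n) + 2m · F(H_{m-1} H_n)`, which, by the symmetry in `m, n`,
starts from the Gaussian integral `F 1 = √π e^{-t²/4}`. The right-hand side obeys the same
recursion, because the complex Hermite polynomials satisfy
`H_{m,n+1}(z, z̄) = z̄ H_{m,n} - m H_{m-1,n}` and `z = -it/√2` is purely imaginary.
-/

open Finset in
theorem Hc_eq_sum_range (m n N : ℕ) (hN : n < N) (z : ℂ) :
    Hc m n z = ∑ k ∈ range N,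
      (-1 : ℂ) ^ k * (k.factorial : ℂ) * (m.choose k : ℂ) * (n.choose k : ℂ)
        * z ^ (m - k) * (starRingEnd ℂ z) ^ (n - k) := by
  refine sum_subset (range_subset_range.mpr (by omega)) fun k hk hk' => ?_
  have hmn : m < k ∨ n < k := by simp only [mem_range] at hk hk'; omega
  rcases hmn with h | h <;> simp [Nat.choose_eq_zero_of_lt h]

theorem Hc_zero_right (m : ℕ) (z : ℂ) : Hc m 0 z = z ^ m := by
  simp [Hc]

theorem Hc_succ_right (m n : ℕ) (z : ℂ) :
    Hc m (n + 1) z = starRingEnd ℂ z * Hc m n z - m * Hc (m - 1) n z := by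
  rw [Hc_eq_sum_range m (n + 1) (n + 2) (by omega), Hc_eq_sum_range m n (n + 2) (by omega),
    Hc_eq_sum_range (m - 1) n (n + 1) (by omega)]
  conv_lhs => rw [Finset.sum_range_succ']
  conv_rhs => rw [Finset.sum_range_succ' _ (n + 1)]
  set w := starRingEnd ℂ z
  have absorb (k : ℕ) :
      (m : ℂ) * ((m - 1).choose k : ℂ) = (m.choose (k + 1) : ℂ) * (k + 1) := by
    rcases m with _ | m
    · simp
    · exact_mod_cast Nat.add_one_mul_choose_eq m k
  have hsummand : ∀ k ∈ Finset.range (n + 1),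
      (-1 : ℂ) ^ (k + 1) * ((k + 1).factorial : ℂ) * (m.choose (k + 1) : ℂ)
          * ((n + 1).choose (k + 1) : ℂ) * z ^ (m - (k + 1)) * w ^ (n + 1 - (k + 1))
        = w * ((-1 : ℂ) ^ (k + 1) * ((k + 1).factorial : ℂ) * (m.choose (k + 1) : ℂ)
            * (n.choose (k + 1) : ℂ) * z ^ (m - (k + 1)) * w ^ (n - (k + 1)))
          - m * ((-1 : ℂ) ^ k * (k.factorial : ℂ) * ((m - 1).choose k : ℂ)
            * (n.choose k : ℂ) * z ^ (m - 1 - k) * w ^ (n - k)) := by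
    intro k hk
    have hkn : k ≤ n := Nat.lt_succ_iff.mp (Finset.mem_range.mp hk)
    have hw : w * w ^ (n - (k + 1)) * (n.choose (k + 1) : ℂ)
        = w ^ (n - k) * (n.choose (k + 1) : ℂ) := by
      rcases hkn.lt_or_eq with hkn | rfl
      · rw [← pow_succ']; congr 2; omega
      · simp
    rw [Nat.choose_succ_succ', Nat.factorial_succ, show n + 1 - (k + 1) = n - k by omega,
      show m - 1 - k = m - (k + 1) by omega]
    push_cast
    linear_combination
      (-1 : ℂ) ^ k * (k.factorial : ℂ) * (n.choose k) * z ^ (m - (k + 1)) * w ^ (n - k)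
          * absorb k
        - (-1 : ℂ) ^ (k + 1) * ((k + 1) * k.factorial : ℂ) * (m.choose (k + 1))
          * z ^ (m - (k + 1)) * hw
  rw [Finset.sum_congr rfl hsummand, Finset.sum_sub_distrib, ← Finset.mul_sum, ← Finset.mul_sum]
  simp only [pow_zero, Nat.factorial_zero, Nat.choose_zero_right, Nat.sub_zero, Nat.cast_one]
  ring

open Polynomial

/-- Mathlib's `Polynomial.hermite` is the probabilists' family; these are the physicists'. -/
noncomputable def physHermite : ℕ → ℝ[X]
  | 0 => 1
  | n + 1 => C 2 * X * physHermite n - derivative (physHermite n)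

@[simp]
theorem physHermite_zero : physHermite 0 = 1 := rfl

theorem hasDerivAt_eval_mul_exp_neg_sq (P : ℝ[X]) (x : ℝ) :
    HasDerivAt (fun y => P.eval y * Real.exp (-y ^ 2))
      ((derivative P - C 2 * X * P).eval x * Real.exp (-x ^ 2)) x := by
  have hexp : HasDerivAt (fun y : ℝ => Real.exp (-y ^ 2)) (Real.exp (-x ^ 2) * -(2 * x)) x := by
    simpa using ((hasDerivAt_pow 2 x).fun_neg).exp
  refine ((P.hasDerivAt x).fun_mul hexp).congr_deriv ?_
  simp only [eval_sub, eval_mul, eval_C, eval_X]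
  ring

theorem iteratedDeriv_exp_neg_sq (n : ℕ) :
    iteratedDeriv n (fun y => Real.exp (-y ^ 2)) =
      fun x => (-1) ^ n * (physHermite n).eval x * Real.exp (-x ^ 2) := by
  induction n with
  | zero => funext x; simp
  | succ n ih =>
    funext x
    have h := ((hasDerivAt_eval_mul_exp_neg_sq (physHermite n) x).const_mul ((-1 : ℝ) ^ n))
    simp only [← mul_assoc] at h
    rw [iteratedDeriv_succ, ih, h.deriv, physHermite, pow_succ]
    simp only [eval_sub, eval_mul, eval_C, eval_X]
    ring

theorem Hphys_eq_eval_physHermite (n : ℕ) (x : ℝ) : Hphys n x = (physHermite n).eval x := by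
  rw [Hphys, iteratedDeriv_exp_neg_sq]
  have hexp : Real.exp (x ^ 2) * Real.exp (-x ^ 2) = 1 := by rw [← Real.exp_add]; simp
  have hsign : (-1 : ℝ) ^ n * (-1) ^ n = 1 := by rw [← mul_pow]; norm_num
  linear_combination (physHermite n).eval x * ((-1) ^ n * (-1) ^ n * hexp + hsign)

theorem derivative_physHermite_succ (n : ℕ) :
    derivative (physHermite (n + 1)) = C (2 * (n + 1) : ℝ) * physHermite n := by
  induction n with
  | zero => simp [physHermite]
  | succ n ih =>
    rw [physHermite, derivative_sub, derivative_mul, derivative_mul, ih, physHermite]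
    simp only [derivative_C, derivative_X, derivative_mul, zero_mul, zero_add, mul_one]
    simp only [map_mul, map_add, map_natCast, map_one, map_ofNat, Nat.cast_add, Nat.cast_one]
    ring

theorem derivative_physHermite (n : ℕ) :
    derivative (physHermite n) = C (2 * n : ℝ) * physHermite (n - 1) := by
  rcases n with _ | n
  · simp [physHermite]
  · simpa using derivative_physHermite_succ n

theorem physHermite_mul_physHermite_succ (m n : ℕ) :
    physHermite m * physHermite (n + 1) =
      C 2 * X * (physHermite m * physHermite n) - derivative (physHermite m * physHermite n)
        + C (2 * m : ℝ) * (physHermite (m - 1) * physHermite n) := by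
  rw [physHermite, derivative_mul, derivative_physHermite m]
  ring

theorem integrable_eval_mul_exp_neg_sq (P : ℝ[X]) :
    Integrable (fun x : ℝ => P.eval x * Real.exp (-x ^ 2)) := by
  induction P using Polynomial.induction_on' with
  | add P Q hP hQ => simp only [eval_add, add_mul]; exact hP.add hQ
  | monomial k a =>
    have h := integrable_rpow_mul_exp_neg_mul_sq one_pos (s := k)
      (neg_one_lt_zero.trans_le k.cast_nonneg)
    simp only [Real.rpow_natCast, neg_mul, one_mul] at h
    simpa [mul_assoc] using h.const_mul a

theorem integrable_eval_mul_cexp_quadratic (P : ℝ[X]) (t : ℝ) :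
    Integrable (fun y : ℝ => ((P.eval y : ℝ) : ℂ) * cexp (-(y : ℂ) ^ 2 - I * t * y)) := by
  refine (integrable_eval_mul_exp_neg_sq P).norm.mono' (by fun_prop) (ae_of_all _ fun y => ?_)
  simp [Complex.norm_exp, abs_of_pos (Real.exp_pos _), ← ofReal_pow]

noncomputable def gaussFourier (t : ℝ) : ℝ[X] →ₗ[ℝ] ℂ where
  toFun P := ∫ y : ℝ, ((P.eval y : ℝ) : ℂ) * cexp (-(y : ℂ) ^ 2 - I * t * y)
  map_add' P Q := by
    simp only [eval_add, ofReal_add, add_mul]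
    exact integral_add (integrable_eval_mul_cexp_quadratic P t)
      (integrable_eval_mul_cexp_quadratic Q t)
  map_smul' a P := by
    simp only [eval_smul, smul_eq_mul, ofReal_mul, mul_assoc, integral_const_mul, RingHom.id_apply,
      real_smul]

theorem gaussFourier_apply (t : ℝ) (P : ℝ[X]) :
    gaussFourier t P = ∫ y : ℝ, ((P.eval y : ℝ) : ℂ) * cexp (-(y : ℂ) ^ 2 - I * t * y) :=
  rfl

theorem gaussFourier_one (t : ℝ) :
    gaussFourier t 1 = Real.sqrt π * cexp (-(t : ℂ) ^ 2 / 4) := by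
  have h := integral_cexp_quadratic (b := -1) (by simp) (-(I * t)) 0
  have hexponent (y : ℝ) :
      -1 * (y : ℂ) ^ 2 + -(I * t) * y + 0 = -(y : ℂ) ^ 2 - I * t * y := by
    ring
  have hvalue : 0 - (-(I * t)) ^ 2 / (4 * -1) = -(t : ℂ) ^ 2 / 4 := by
    linear_combination (t : ℂ) ^ 2 / 4 * I_sq
  simp only [hexponent, hvalue, neg_neg, div_one] at h
  rw [gaussFourier_apply, Real.sqrt_eq_rpow, ofReal_cpow Real.pi_pos.le]
  simpa using h

theorem gaussFourier_derivative_sub (t : ℝ) (P : ℝ[X]) :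
    gaussFourier t (derivative P - C 2 * X * P) = I * t * gaussFourier t P := by
  set E : ℝ → ℂ := fun y => cexp (-(y : ℂ) ^ 2 - I * t * y)
  have hE : ∀ y : ℝ, HasDerivAt E (E y * (-2 * y - I * t)) y := by
    intro y
    have h : HasDerivAt (fun z : ℂ => -z ^ 2 - I * t * z) (-(2 * y) - I * t) (y : ℂ) := by
      simpa using (hasDerivAt_pow 2 (y : ℂ)).fun_neg.fun_sub
        ((hasDerivAt_id' (y : ℂ)).const_mul (I * t))
    exact h.comp_ofReal.cexp.congr_deriv (by ring)
  have hP : ∀ y : ℝ, HasDerivAt (fun y : ℝ => ((P.eval y : ℝ) : ℂ) * E y)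
      ((((derivative P - C 2 * X * P).eval y : ℝ) : ℂ) * E y
        - I * t * (((P.eval y : ℝ) : ℂ) * E y)) y := by
    intro y
    refine ((P.hasDerivAt y).ofReal_comp.mul (hE y)).congr_deriv ?_
    simp only [eval_sub, eval_mul, eval_C, eval_X]
    push_cast
    ring
  have h0 := integral_eq_zero_of_hasDerivAt_of_integrable hP
    ((integrable_eval_mul_cexp_quadratic _ t).sub
      ((integrable_eval_mul_cexp_quadratic P t).const_mul _))
    (integrable_eval_mul_cexp_quadratic P t)
  rw [integral_sub (integrable_eval_mul_cexp_quadratic _ t)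
    ((integrable_eval_mul_cexp_quadratic P t).const_mul _), integral_const_mul] at h0
  exact sub_eq_zero.mp h0

theorem gaussFourier_physHermite_mul_succ (t : ℝ) (m n : ℕ) :
    gaussFourier t (physHermite m * physHermite (n + 1)) =
      -(I * t) * gaussFourier t (physHermite m * physHermite n)
        + 2 * m * gaussFourier t (physHermite (m - 1) * physHermite n) := by
  rw [physHermite_mul_physHermite_succ, map_add, ← neg_sub, map_neg, gaussFourier_derivative_sub,
    C_mul', map_smul, real_smul]
  push_cast
  ring

theorem gaussFourier_physHermite_zero_mul (t : ℝ) (n : ℕ) :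
    gaussFourier t (physHermite 0 * physHermite n) =
      (-(I * t)) ^ n * (Real.sqrt π * cexp (-(t : ℂ) ^ 2 / 4)) := by
  induction n with
  | zero => simp [gaussFourier_one]
  | succ n ih => rw [gaussFourier_physHermite_mul_succ, ih]; push_cast; ring

theorem gaussFourier_physHermite_mul (t : ℝ) (m n : ℕ) :
    gaussFourier t (physHermite m * physHermite n) =
      (-1) ^ n * Real.sqrt π * (Real.sqrt 2 : ℂ) ^ (m + n) * cexp (-(t : ℂ) ^ 2 / 4)
        * Hc m n (-(I * t) / Real.sqrt 2) := by
  set s : ℂ := ((Real.sqrt 2 : ℝ) : ℂ)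
  set z : ℂ := -(I * t) / s
  have hs : s ^ 2 = 2 := by simp [s, ← ofReal_pow]
  have hsz : s * z = -(I * t) := mul_div_cancel₀ _ (by simp [s])
  have hconj : s * starRingEnd ℂ z = I * t := by
    simp only [z, map_div₀, map_neg, map_mul, conj_I, conj_ofReal, s]
    field_simp
  induction n generalizing m with
  | zero =>
    rw [mul_comm, gaussFourier_physHermite_zero_mul, Hc_zero_right, ← hsz]
    ring
  | succ n ih =>
    rw [gaussFourier_physHermite_mul_succ, ih, ih, Hc_succ_right]
    rcases m with _ | m
    · simp only [Nat.cast_zero, zero_mul, sub_zero, zero_add, mul_zero, add_zero]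
      linear_combination
        (-1) ^ n * Real.sqrt π * s ^ n * cexp (-(t : ℂ) ^ 2 / 4) * Hc 0 n z * hconj
    · simp only [Nat.add_sub_cancel, Nat.cast_succ]
      linear_combination (-1) ^ n * Real.sqrt π * cexp (-(t : ℂ) ^ 2 / 4)
        * (s ^ (m + 1 + n) * Hc (m + 1) n z * hconj - (m + 1) * s ^ (m + n) * Hc m n z * hs)

theorem hermite_fourier_integral (m n : ℕ) (t : ℝ) :
    ∫ y : ℝ, (Hphys m y : ℂ) * (Hphys n y : ℂ) * Complex.exp (-(y : ℂ)^2 - Complex.I * t * y)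
      = (-1 : ℂ)^n * (Real.sqrt Real.pi : ℂ) * (((2 : ℝ) ^ (((m : ℝ) + n) / 2) : ℝ) : ℂ)
          * Complex.exp (-(t : ℂ)^2 / 4)
          * Hc m n (-(Complex.I * t) / (Real.sqrt 2 : ℂ)) := by
  have hL : ∫ y : ℝ, (Hphys m y : ℂ) * (Hphys n y : ℂ) * cexp (-(y : ℂ) ^ 2 - I * t * y)
      = gaussFourier t (physHermite m * physHermite n) := by
    simp only [gaussFourier_apply, Hphys_eq_eval_physHermite, eval_mul, ofReal_mul]
  rw [hL, gaussFourier_physHermite_mul, Real.rpow_div_two_eq_sqrt _ zero_le_two, ← Nat.cast_add,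
    Real.rpow_natCast]
  push_cast
  ring
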